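/- Let p < q be odd primes. Then the Sombor index of the unit graph of ℤ_{pq} satisfies SO(G(ℤ_{pq})) = √2·α·φ(pq) + β·√(φ(pq)² + (φ(pq) − 1)²) + √2·(|E| − α − β)·(φ(pq) − 1), where α = (p−1)(q−1), β = (p−1)(q−1)(p + q − 3), and |E| = (pq − 1)·φ(pq)/2 is the number of edges of G(ℤ_{pq}). -/

import Mathlib

open scoped Classical

/-- The total graph of a commutative ring `R`: distinct `x`, `y` are adjacent
iff `x + y` is not a unit of `R`. -/
def totalGraph (R : Type*) [CommRing R] : SimpleGraph R where
  Adj x y := x ≠ y ∧ ¬ IsUnit (x + y)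
  symm := ⟨fun x y ⟨h1, h2⟩ => ⟨h1.symm, by rwa [add_comm]⟩⟩
  loopless := ⟨fun x h => h.1 rfl⟩

/-- The unit graph of a commutative ring `R`: distinct `x`, `y` are adjacent
iff `x + y` is a unit of `R`. -/
def unitGraph (R : Type*) [CommRing R] : SimpleGraph R where
  Adj x y := x ≠ y ∧ IsUnit (x + y)
  symm := ⟨fun x y ⟨h1, h2⟩ => ⟨h1.symm, by rwa [add_comm]⟩⟩
  loopless := ⟨fun x h => h.1 rfl⟩

/-- The Sombor index of a finite simple graph:
`SO(G) = ∑_{uv ∈ E(G)} √(deg u ^ 2 + deg v ^ 2)`. -/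
noncomputable def somborIndex {V : Type*} [Fintype V] (G : SimpleGraph V) : ℝ :=
  ∑ e ∈ G.edgeFinset,
    Sym2.lift ⟨fun u v => Real.sqrt ((G.degree u : ℝ) ^ 2 + (G.degree v : ℝ) ^ 2),
      fun u v => by dsimp only; rw [add_comm]⟩ e

open Finset

lemma prod_isUnit_iff {M N : Type*} [Monoid M] [Monoid N] (x : M × N) :
    IsUnit x ↔ IsUnit x.1 ∧ IsUnit x.2 := by
  constructor
  · intro h
    exact ⟨h.map (MonoidHom.fst M N), h.map (MonoidHom.snd M N)⟩
  · rintro ⟨⟨u, hu⟩, ⟨v, hv⟩⟩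
    exact ⟨MulEquiv.prodUnits.symm (u, v), by simp [MulEquiv.prodUnits, hu, hv]⟩

lemma ringEquiv_isUnit_iff {A B : Type*} [CommRing A] [CommRing B] (e : A ≃+* B) (a : A) :
    IsUnit (e a) ↔ IsUnit a := by
  constructor
  · intro h
    have := h.map e.symm.toRingHom
    simpa using this
  · intro h; exact h.map e.toRingHom

-- count units
lemma card_isUnit_filter (n : ℕ) [NeZero n] :
    (univ.filter fun x : ZMod n => IsUnit x).card = n.totient := by
  rw [← ZMod.card_units_eq_totient]
  rw [← Fintype.card_subtype]
  exact Fintype.card_congr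
    ⟨fun x => x.2.unit, fun u => ⟨u, u.isUnit⟩, fun x => Subtype.ext x.2.unit_spec,
     fun u => Units.ext u.isUnit.unit_spec⟩

section FieldCount
variable {F : Type*} [Field F] [Fintype F]

omit [Field F] in
lemma cardPairSum (P : F × F → Prop) [DecidablePred P] :
    (univ.filter P).card = ∑ a : F, (univ.filter fun b => P (a, b)).card := by
  simp only [Finset.card_filter]
  rw [Fintype.sum_prod_type]

lemma count_b_ne (a : F) : (univ.filter fun b : F => a + b ≠ 0).card = Fintype.card F - 1 := by
  have : (univ.filter fun b : F => a + b ≠ 0) = univ.erase (-a) := by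
    ext b
    simp [eq_neg_iff_add_eq_zero, add_comm]
  rw [this, Finset.card_erase_of_mem (Finset.mem_univ _), Finset.card_univ]

lemma count_b_ne_ne {a : F} (ha : a ≠ 0) :
    (univ.filter fun b : F => b ≠ 0 ∧ a + b ≠ 0).card = Fintype.card F - 2 := by
  have h1 : (univ.filter fun b : F => b ≠ 0 ∧ a + b ≠ 0) = univ \ {0, -a} := by
    ext b
    simp [eq_neg_iff_add_eq_zero, add_comm, and_comm]
  have h0 : (0:F) ∉ ({-a} : Finset F) := by simp [eq_comm, neg_eq_zero, ha]
  rw [h1, Finset.card_sdiff_of_subset (by simp), Finset.card_univ,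
    Finset.card_insert_of_notMem h0, Finset.card_singleton]

lemma count_ne_zero : (univ.filter fun a : F => ¬ a = 0).card = Fintype.card F - 1 := by
  have : (univ.filter fun a : F => ¬ a = 0) = univ.erase 0 := by ext a; simp
  rw [this, Finset.card_erase_of_mem (Finset.mem_univ _), Finset.card_univ]
lemma sum_ite_ne (k : ℕ) :
    ∑ a : F, (if a = 0 then 0 else k) = (Fintype.card F - 1) * k := by
  have : ∀ a : F, (if a = 0 then 0 else k) = (if ¬ a = 0 then 1 else 0) * k := by
    intro a; by_cases h : a = 0 <;> simp [h]
  rw [Finset.sum_congr rfl fun a _ => this a, ← Finset.sum_mul, Finset.sum_boole]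
  simp [count_ne_zero]

lemma countA [DecidablePred fun z : F × F => z.1 = 0 ∧ z.2 ≠ 0] : (univ.filter fun z : F × F => z.1 = 0 ∧ z.2 ≠ 0).card = Fintype.card F - 1 := by
  rw [cardPairSum]
  have : ∀ a : F, (univ.filter fun b : F => (a, b).1 = 0 ∧ (a, b).2 ≠ 0).card
      = if a = 0 then Fintype.card F - 1 else 0 := by
    intro a
    by_cases h : a = 0 <;>
      simp [h, Finset.filter_ne', Finset.card_erase_of_mem, Finset.card_univ]
  rw [Finset.sum_congr rfl fun a _ => this a]
  simp

lemma countB [DecidablePred fun z : F × F => z.1 ≠ 0 ∧ z.2 = 0] : (univ.filter fun z : F × F => z.1 ≠ 0 ∧ z.2 = 0).card = Fintype.card F - 1 := by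
  rw [cardPairSum]
  have : ∀ a : F, (univ.filter fun b : F => (a, b).1 ≠ 0 ∧ (a, b).2 = 0).card
      = if a = 0 then 0 else 1 := by
    intro a
    by_cases h : a = 0
    · simp [h]
    · simp only [h, if_neg]
      rw [show (univ.filter fun b : F => a ≠ 0 ∧ b = 0) = {0} by ext b; simp [h]]
      simp
  rw [Finset.sum_congr rfl fun a _ => this a, sum_ite_ne]
  simp

lemma countC [DecidablePred fun z : F × F => z.1 ≠ 0 ∧ z.2 ≠ 0 ∧ z.1 + z.2 ≠ 0] : (univ.filter fun z : F × F => z.1 ≠ 0 ∧ z.2 ≠ 0 ∧ z.1 + z.2 ≠ 0).card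
    = (Fintype.card F - 1) * (Fintype.card F - 2) := by
  rw [cardPairSum]
  have : ∀ a : F, (univ.filter fun b : F => (a, b).1 ≠ 0 ∧ (a, b).2 ≠ 0 ∧ (a, b).1 + (a, b).2 ≠ 0).card
      = if a = 0 then 0 else Fintype.card F - 2 := by
    intro a
    by_cases h : a = 0
    · simp [h]
    · rw [if_neg h]
      rw [show (univ.filter fun b : F => (a, b).1 ≠ 0 ∧ (a, b).2 ≠ 0 ∧ (a, b).1 + (a, b).2 ≠ 0)
          = (univ.filter fun b : F => b ≠ 0 ∧ a + b ≠ 0) by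
        apply Finset.filter_congr; intro b _; simp [h]]
      exact count_b_ne_ne h
  rw [Finset.sum_congr rfl fun a _ => this a, sum_ite_ne]

lemma countD [DecidablePred fun z : F × F => z.1 ≠ 0 ∧ z.1 + z.2 ≠ 0] : (univ.filter fun z : F × F => z.1 ≠ 0 ∧ z.1 + z.2 ≠ 0).card
    = (Fintype.card F - 1) * (Fintype.card F - 1) := by
  rw [cardPairSum]
  have : ∀ a : F, (univ.filter fun b : F => (a, b).1 ≠ 0 ∧ (a, b).1 + (a, b).2 ≠ 0).card
      = if a = 0 then 0 else Fintype.card F - 1 := by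
    intro a
    by_cases h : a = 0
    · simp [h]
    · rw [if_neg h]
      rw [show (univ.filter fun b : F => (a, b).1 ≠ 0 ∧ (a, b).1 + (a, b).2 ≠ 0)
          = (univ.filter fun b : F => a + b ≠ 0) by
        apply Finset.filter_congr; intro b _; simp [h]]
      exact count_b_ne a
  rw [Finset.sum_congr rfl fun a _ => this a, sum_ite_ne]

end FieldCount

section Degree
variable (n : ℕ) [NeZero n]

lemma unitGraph_adj (x y : ZMod n) :
    (unitGraph (ZMod n)).Adj x y ↔ x ≠ y ∧ IsUnit (x + y) := Iff.rfl

lemma unitGraph_degree (h2 : IsUnit (2 : ZMod n)) (x : ZMod n) :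
    (unitGraph (ZMod n)).degree x + (if IsUnit x then 1 else 0) = n.totient := by
  classical
  have hdeg : (unitGraph (ZMod n)).degree x
      = (univ.filter fun y : ZMod n => x ≠ y ∧ IsUnit (x + y)).card := by
    rw [← SimpleGraph.card_neighborFinset_eq_degree, SimpleGraph.neighborFinset_eq_filter]
    congr 1
    ext y
    rw [Finset.mem_filter, Finset.mem_filter]
    simp [unitGraph]
  have hbij : (univ.filter fun y : ZMod n => x ≠ y ∧ IsUnit (x + y)).card
      = (univ.filter fun z : ZMod n => z ≠ x + x ∧ IsUnit z).card := by
    apply Finset.card_nbij' (i := fun y => x + y) (j := fun z => z - x)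
    · intro a ha
      simp only [Finset.mem_coe, Finset.mem_filter, Finset.mem_univ, true_and] at ha ⊢
      refine ⟨fun h => ha.1 (add_left_cancel h).symm, ha.2⟩
    · intro z hz
      simp only [Finset.mem_coe, Finset.mem_filter, Finset.mem_univ, true_and] at hz ⊢
      refine ⟨fun h => hz.1 (sub_eq_iff_eq_add.mp h.symm), ?_⟩
      rw [show x + (z - x) = z by ring]
      exact hz.2
    · intro a _; simp
    · intro z _; simp
  have herase : (univ.filter fun z : ZMod n => z ≠ x + x ∧ IsUnit z)
      = (univ.filter fun z : ZMod n => IsUnit z).erase (x + x) := by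
    ext z; simp [and_comm]
  have hxx : IsUnit (x + x) ↔ IsUnit x := by
    rw [← two_mul, (Commute.all (2 : ZMod n) x).isUnit_mul_iff]
    simp [h2]
  have htot : 1 ≤ n.totient := Nat.totient_pos.mpr (NeZero.pos n)
  rw [hdeg, hbij, herase]
  by_cases hx : IsUnit x
  · rw [if_pos hx, Finset.card_erase_of_mem (by simp [hxx, hx]), card_isUnit_filter]
    omega
  · rw [if_neg hx, Finset.erase_eq_of_notMem (by simp [hxx, hx]), card_isUnit_filter]
    omega

end Degree

section Transfer
variable {R S : Type*} [CommRing R] [CommRing S] [Fintype R] [Fintype S]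

lemma card_transfer (e : R ≃+* S) (P : R × R → Prop) (Q : S × S → Prop)
    [DecidablePred P] [DecidablePred Q]
    (h : ∀ x y : R, P (x, y) ↔ Q (e x, e y)) :
    (univ.filter P).card = (univ.filter Q).card := by
  apply Finset.card_equiv (e.toEquiv.prodCongr e.toEquiv)
  intro z
  simp only [Finset.mem_filter, Finset.mem_univ, true_and, Equiv.prodCongr_apply]
  exact h z.1 z.2

end Transfer

lemma card_prod_split {α β : Type*} [Fintype α] [Fintype β]
    (C1 : α × α → Prop) (C2 : β × β → Prop) [DecidablePred C1] [DecidablePred C2] :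
    (univ.filter fun z : (α × β) × (α × β) => C1 (z.1.1, z.2.1) ∧ C2 (z.1.2, z.2.2)).card
      = (univ.filter C1).card * (univ.filter C2).card := by
  classical
  have h1 : (univ.filter fun z : (α × β) × (α × β) => C1 (z.1.1, z.2.1) ∧ C2 (z.1.2, z.2.2)).card
      = (univ.filter fun w : (α × α) × (β × β) => C1 w.1 ∧ C2 w.2).card := by
    apply Finset.card_equiv (Equiv.prodProdProdComm α β α β)
    intro z
    simp [Equiv.prodProdProdComm]
  rw [h1, ← Finset.univ_product_univ, Finset.filter_product, Finset.card_product]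

section Counts
variable (p q : ℕ) [hp : Fact p.Prime] [hq : Fact q.Prime]

lemma filter_or_card {α : Type*} [Fintype α] (Q1 Q2 : α → Prop)
    [DecidablePred Q1] [DecidablePred Q2]
    (hdisj : ∀ a, ¬(Q1 a ∧ Q2 a)) :
    (univ.filter fun a => Q1 a ∨ Q2 a).card
      = (univ.filter Q1).card + (univ.filter Q2).card := by
  classical
  rw [Finset.filter_or, Finset.card_union_of_disjoint]
  rw [Finset.disjoint_left]
  intro a h1 h2
  simp only [Finset.mem_filter] at h1 h2
  exact hdisj a ⟨h1.2, h2.2⟩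

lemma countN0 (hpq : p ≠ q) :
    haveI : NeZero (p * q) := ⟨Nat.mul_ne_zero hp.out.ne_zero hq.out.ne_zero⟩
    (univ.filter fun z : ZMod (p * q) × ZMod (p * q) =>
      ¬IsUnit z.1 ∧ ¬IsUnit z.2 ∧ IsUnit (z.1 + z.2)).card = 2 * ((p - 1) * (q - 1)) := by
  haveI : NeZero (p * q) := ⟨Nat.mul_ne_zero hp.out.ne_zero hq.out.ne_zero⟩
  have hcop : p.Coprime q := (Nat.coprime_primes hp.out hq.out).mpr hpq
  set e := ZMod.chineseRemainder hcop
  rw [card_transfer e _ (fun w : (ZMod p × ZMod q) × (ZMod p × ZMod q) =>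
      ((w.1.1 = 0 ∧ w.2.1 ≠ 0) ∧ (w.1.2 ≠ 0 ∧ w.2.2 = 0)) ∨
      ((w.1.1 ≠ 0 ∧ w.2.1 = 0) ∧ (w.1.2 = 0 ∧ w.2.2 ≠ 0)))]
  · rw [filter_or_card _ _ (by rintro a ⟨⟨⟨h1, _⟩, _⟩, ⟨h2, _⟩, _⟩; exact h2 h1)]
    rw [card_prod_split (fun w : ZMod p × ZMod p => w.1 = 0 ∧ w.2 ≠ 0)
        (fun w : ZMod q × ZMod q => w.1 ≠ 0 ∧ w.2 = 0),
      card_prod_split (fun w : ZMod p × ZMod p => w.1 ≠ 0 ∧ w.2 = 0)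
        (fun w : ZMod q × ZMod q => w.1 = 0 ∧ w.2 ≠ 0)]
    rw [countA, countB, countA, countB, ZMod.card, ZMod.card]
    ring
  · intro x y
    simp only
    have hx := (ringEquiv_isUnit_iff e x).symm.trans ((prod_isUnit_iff (e x)).trans
      (and_congr isUnit_iff_ne_zero isUnit_iff_ne_zero))
    have hy := (ringEquiv_isUnit_iff e y).symm.trans ((prod_isUnit_iff (e y)).trans
      (and_congr isUnit_iff_ne_zero isUnit_iff_ne_zero))
    have hxy : IsUnit (x + y) ↔ ((e x).1 + (e y).1 ≠ 0 ∧ (e x).2 + (e y).2 ≠ 0) := by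
      rw [← ringEquiv_isUnit_iff e (x + y), map_add, prod_isUnit_iff]
      simp [isUnit_iff_ne_zero]
    rw [hx, hy, hxy]
    by_cases h1 : (e x).1 = 0 <;> by_cases h2 : (e x).2 = 0 <;>
      by_cases h3 : (e y).1 = 0 <;> by_cases h4 : (e y).2 = 0 <;> simp_all

end Counts

lemma countN1 (p q : ℕ) [hp : Fact p.Prime] [hq : Fact q.Prime] (hpq : p ≠ q) :
    haveI : NeZero (p * q) := ⟨Nat.mul_ne_zero hp.out.ne_zero hq.out.ne_zero⟩
    (univ.filter fun z : ZMod (p * q) × ZMod (p * q) =>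
      IsUnit z.1 ∧ ¬IsUnit z.2 ∧ IsUnit (z.1 + z.2)).card
      = (p - 1) * ((q - 1) * (q - 1)) + (p - 1) * (p - 2) * (q - 1) := by
  haveI : NeZero (p * q) := ⟨Nat.mul_ne_zero hp.out.ne_zero hq.out.ne_zero⟩
  have hcop : p.Coprime q := (Nat.coprime_primes hp.out hq.out).mpr hpq
  set e := ZMod.chineseRemainder hcop
  rw [card_transfer e _ (fun w : (ZMod p × ZMod q) × (ZMod p × ZMod q) =>
      ((w.1.1 ≠ 0 ∧ w.2.1 = 0) ∧ (w.1.2 ≠ 0 ∧ w.1.2 + w.2.2 ≠ 0)) ∨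
      ((w.1.1 ≠ 0 ∧ w.2.1 ≠ 0 ∧ w.1.1 + w.2.1 ≠ 0) ∧ (w.1.2 ≠ 0 ∧ w.2.2 = 0)))]
  · rw [filter_or_card _ _ (by rintro a ⟨⟨⟨_, h1⟩, _⟩, ⟨_, h2, _⟩, _⟩; exact h2 h1)]
    rw [card_prod_split (fun w : ZMod p × ZMod p => w.1 ≠ 0 ∧ w.2 = 0)
        (fun w : ZMod q × ZMod q => w.1 ≠ 0 ∧ w.1 + w.2 ≠ 0),
      card_prod_split (fun w : ZMod p × ZMod p => w.1 ≠ 0 ∧ w.2 ≠ 0 ∧ w.1 + w.2 ≠ 0)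
        (fun w : ZMod q × ZMod q => w.1 ≠ 0 ∧ w.2 = 0)]
    rw [countB, countD, countC, countB, ZMod.card, ZMod.card]
  · intro x y
    simp only
    have hx := (ringEquiv_isUnit_iff e x).symm.trans ((prod_isUnit_iff (e x)).trans
      (and_congr isUnit_iff_ne_zero isUnit_iff_ne_zero))
    have hy := (ringEquiv_isUnit_iff e y).symm.trans ((prod_isUnit_iff (e y)).trans
      (and_congr isUnit_iff_ne_zero isUnit_iff_ne_zero))
    have hxy : IsUnit (x + y) ↔ ((e x).1 + (e y).1 ≠ 0 ∧ (e x).2 + (e y).2 ≠ 0) := by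
      rw [← ringEquiv_isUnit_iff e (x + y), map_add, prod_isUnit_iff]
      simp [isUnit_iff_ne_zero]
    rw [hx, hy, hxy]
    by_cases h1 : (e x).1 = 0 <;> by_cases h2 : (e x).2 = 0 <;>
      by_cases h3 : (e y).1 = 0 <;> by_cases h4 : (e y).2 = 0 <;> simp_all

section Graphs
variable (n : ℕ) [NeZero n]

def G0 : SimpleGraph (ZMod n) where
  Adj x y := x ≠ y ∧ IsUnit (x + y) ∧ ¬IsUnit x ∧ ¬IsUnit y
  symm := ⟨fun x y ⟨h, hs, hx, hy⟩ => ⟨h.symm, by rwa [add_comm], hy, hx⟩⟩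
  loopless := ⟨fun x h => h.1 rfl⟩

def G1 : SimpleGraph (ZMod n) where
  Adj x y := x ≠ y ∧ IsUnit (x + y) ∧ ¬(IsUnit x ↔ IsUnit y)
  symm := ⟨fun x y ⟨h, hs, hxy⟩ => ⟨h.symm, by rwa [add_comm], fun hi => hxy hi.symm⟩⟩
  loopless := ⟨fun x h => h.1 rfl⟩

def G2 : SimpleGraph (ZMod n) where
  Adj x y := x ≠ y ∧ IsUnit (x + y) ∧ IsUnit x ∧ IsUnit y
  symm := ⟨fun x y ⟨h, hs, hx, hy⟩ => ⟨h.symm, by rwa [add_comm], hy, hx⟩⟩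
  loopless := ⟨fun x h => h.1 rfl⟩

lemma isUnit_add_self (h2 : IsUnit (2 : ZMod n)) (x : ZMod n) :
    IsUnit (x + x) ↔ IsUnit x := by
  rw [← two_mul, (Commute.all (2 : ZMod n) x).isUnit_mul_iff]
  simp [h2]

lemma G0_card (h2 : IsUnit (2 : ZMod n)) :
    2 * (G0 n).edgeFinset.card = (univ.filter fun z : ZMod n × ZMod n =>
      ¬IsUnit z.1 ∧ ¬IsUnit z.2 ∧ IsUnit (z.1 + z.2)).card := by
  rw [SimpleGraph.two_mul_card_edgeFinset]
  apply Finset.card_equiv (Equiv.refl _)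
  rintro ⟨x, y⟩
  simp only [Finset.mem_filter, Finset.mem_univ, true_and, Equiv.refl_apply]
  show (G0 n).Adj x y ↔ _
  simp only [G0]
  constructor
  · rintro ⟨_, hs, hx, hy⟩; exact ⟨hx, hy, hs⟩
  · rintro ⟨hx, hy, hs⟩
    refine ⟨fun h => ?_, hs, hx, hy⟩
    subst h
    exact hx ((isUnit_add_self n h2 x).mp hs)

lemma G1_card :
    2 * (G1 n).edgeFinset.card = 2 * (univ.filter fun z : ZMod n × ZMod n =>
      IsUnit z.1 ∧ ¬IsUnit z.2 ∧ IsUnit (z.1 + z.2)).card := by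
  rw [SimpleGraph.two_mul_card_edgeFinset]
  have h1 : (univ.filter fun (z : ZMod n × ZMod n) => (G1 n).Adj z.1 z.2).card
      = (univ.filter fun z : ZMod n × ZMod n =>
          (IsUnit z.1 ∧ ¬IsUnit z.2 ∧ IsUnit (z.1 + z.2)) ∨
          (¬IsUnit z.1 ∧ IsUnit z.2 ∧ IsUnit (z.1 + z.2))).card := by
    apply Finset.card_equiv (Equiv.refl _)
    rintro ⟨x, y⟩
    simp only [Finset.mem_filter, Finset.mem_univ, true_and, Equiv.refl_apply]
    show (G1 n).Adj x y ↔ _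
    simp only [G1]
    constructor
    · rintro ⟨hne, hs, hxy⟩
      by_cases hx : IsUnit x
      · exact Or.inl ⟨hx, fun hy => hxy ⟨fun _ => hy, fun _ => hx⟩, hs⟩
      · refine Or.inr ⟨hx, ?_, hs⟩
        by_contra hy
        exact hxy ⟨fun h => absurd h hx, fun h => absurd h hy⟩
    · rintro (⟨hx, hy, hs⟩ | ⟨hx, hy, hs⟩)
      · exact ⟨fun h => hy (h ▸ hx), hs, fun hi => hy (hi.mp hx)⟩
      · exact ⟨fun h => hx (h ▸ hy), hs, fun hi => hx (hi.mpr hy)⟩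
  rw [h1, filter_or_card _ _ (by rintro z ⟨⟨h1, _⟩, ⟨h2, _⟩⟩; exact h2 h1)]
  have h2 : (univ.filter fun z : ZMod n × ZMod n =>
      ¬IsUnit z.1 ∧ IsUnit z.2 ∧ IsUnit (z.1 + z.2)).card
      = (univ.filter fun z : ZMod n × ZMod n =>
          IsUnit z.1 ∧ ¬IsUnit z.2 ∧ IsUnit (z.1 + z.2)).card := by
    apply Finset.card_equiv (Equiv.prodComm _ _)
    rintro ⟨x, y⟩
    simp only [Finset.mem_filter, Finset.mem_univ, true_and, Equiv.prodComm_apply, Prod.swap]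
    rw [add_comm]
    tauto
  rw [h2]
  ring

lemma edge_partition :
    (unitGraph (ZMod n)).edgeFinset
      = ((G0 n).edgeFinset ∪ (G1 n).edgeFinset) ∪ (G2 n).edgeFinset := by
  ext e
  induction e with
  | _ x y =>
    simp only [Finset.mem_union, SimpleGraph.mem_edgeFinset, SimpleGraph.mem_edgeSet]
    show (unitGraph _).Adj x y ↔ ((G0 n).Adj x y ∨ (G1 n).Adj x y) ∨ (G2 n).Adj x y
    simp only [unitGraph, G0, G1, G2]
    by_cases hx : IsUnit x <;> by_cases hy : IsUnit y <;> tauto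

end Graphs

lemma sqrt_two_sq (a : ℝ) (ha : 0 ≤ a) : Real.sqrt (a ^ 2 + a ^ 2) = Real.sqrt 2 * a := by
  rw [← two_mul, Real.sqrt_mul (by norm_num), Real.sqrt_sq ha]


theorem sombor_unit_graph_pq (p q : ℕ) [Fact p.Prime] [Fact q.Prime]
    (hp : Odd p) (hq : Odd q) (hpq : p < q) :
    let φ : ℝ := (Nat.totient (p * q) : ℝ)
    let A : ℝ := ((p : ℝ) - 1) * ((q : ℝ) - 1)
    let B : ℝ := ((p : ℝ) - 1) * ((q : ℝ) - 1) * ((p : ℝ) + (q : ℝ) - 3)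
    let E : ℝ := ((unitGraph (ZMod (p * q))).edgeFinset.card : ℝ)
    E = ((p : ℝ) * (q : ℝ) - 1) * φ / 2 ∧
    somborIndex (unitGraph (ZMod (p * q))) =
      Real.sqrt 2 * A * φ + B * Real.sqrt (φ ^ 2 + (φ - 1) ^ 2) +
        Real.sqrt 2 * (E - A - B) * (φ - 1) := by
  intro φ A B E
  have hpp : p.Prime := Fact.out
  have hqp : q.Prime := Fact.out
  haveI : NeZero (p * q) := ⟨Nat.mul_ne_zero hpp.ne_zero hqp.ne_zero⟩
  have hp3 : 3 ≤ p := by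
    rcases hpp.two_le.lt_or_eq with h | h
    · omega
    · exfalso; rw [← h] at hp; exact (Nat.not_odd_iff_even.mpr (by decide)) hp
  have hq3 : 3 ≤ q := by omega
  have h2 : IsUnit (2 : ZMod (p * q)) := by
    have : ((2 : ℕ) : ZMod (p * q)) = (2 : ZMod (p * q)) := by push_cast; ring
    rw [← this, ZMod.isUnit_iff_coprime, Nat.Prime.coprime_iff_not_dvd Nat.prime_two]
    intro hdvd
    have : Even (p * q) := (even_iff_two_dvd).mpr hdvd
    exact (Nat.not_odd_iff_even.mpr this) (hp.mul hq)
  set G := unitGraph (ZMod (p * q)) with hG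
  set t := (p * q).totient with ht
  have ht1 : 1 ≤ t := Nat.totient_pos.mpr (NeZero.pos _)
  -- degrees
  have hdn : ∀ x : ZMod (p * q), ¬IsUnit x → (G.degree x : ℝ) = φ := by
    intro x hx
    have := unitGraph_degree (p * q) h2 x
    rw [if_neg hx] at this
    simp only [φ, ← this, ← ht]
    push_cast; ring
  have hdu : ∀ x : ZMod (p * q), IsUnit x → (G.degree x : ℝ) = φ - 1 := by
    intro x hx
    have hh := unitGraph_degree (p * q) h2 x
    rw [if_pos hx] at hh
    have : G.degree x = t - 1 := by
      have hh' : G.degree x + 1 = t := hh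
      omega
    rw [this]
    have : (1 : ℕ) ≤ t := ht1
    push_cast [Nat.cast_sub this]
    rfl
  -- handshake : total edge count
  have hsumdeg : ∑ v : ZMod (p * q), (G.degree v + if IsUnit v then 1 else 0)
      = (p * q) * t := by
    rw [Finset.sum_congr rfl fun v _ => unitGraph_degree (p * q) h2 v]
    rw [Finset.sum_const, Finset.card_univ, ZMod.card, smul_eq_mul]
  have hE : 2 * G.edgeFinset.card + t = p * q * t := by
    rw [← hsumdeg, Finset.sum_add_distrib, ← SimpleGraph.sum_degrees_eq_twice_card_edges]
    congr 1
    rw [ht, ← card_isUnit_filter (p * q), Finset.card_filter]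
  have hEr : E = ((p : ℝ) * q - 1) * φ / 2 := by
    have := congrArg (fun k : ℕ => (k : ℝ)) hE
    push_cast at this
    simp only [E, φ, ← ht]
    linarith
  refine ⟨hEr, ?_⟩
  -- edge counts of the pieces
  have hn0 : (G0 (p * q)).edgeFinset.card = (p - 1) * (q - 1) := by
    have h := (G0_card (p * q) h2).trans (countN0 p q hpq.ne)
    omega
  have hn1 : (G1 (p * q)).edgeFinset.card
      = (p - 1) * ((q - 1) * (q - 1)) + (p - 1) * (p - 2) * (q - 1) := by
    have h := (G1_card (p * q)).trans (by rw [countN1 p q hpq.ne])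
    omega
  -- disjointness
  have hd01 : Disjoint (G0 (p * q)).edgeFinset (G1 (p * q)).edgeFinset := by
    rw [Finset.disjoint_left]
    intro e he1 he2
    induction e with
    | _ x y =>
      rw [SimpleGraph.mem_edgeFinset, SimpleGraph.mem_edgeSet] at he1 he2
      obtain ⟨_, _, hx, hy⟩ := he1
      obtain ⟨_, _, hxy⟩ := he2
      exact hxy ⟨fun h => absurd h hx, fun h => absurd h hy⟩
  have hd012 : Disjoint ((G0 (p * q)).edgeFinset ∪ (G1 (p * q)).edgeFinset)
      (G2 (p * q)).edgeFinset := by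
    rw [Finset.disjoint_left]
    intro e he1 he2
    rw [Finset.mem_union] at he1
    induction e with
    | _ x y =>
      rw [SimpleGraph.mem_edgeFinset, SimpleGraph.mem_edgeSet] at he2
      obtain ⟨_, _, hx, hy⟩ := he2
      rcases he1 with he1 | he1 <;>
        rw [SimpleGraph.mem_edgeFinset, SimpleGraph.mem_edgeSet] at he1
      · exact he1.2.2.1 hx
      · exact he1.2.2 ⟨fun _ => hy, fun _ => hx⟩
  -- split the sum
  set f : Sym2 (ZMod (p * q)) → ℝ :=
    Sym2.lift ⟨fun u v => Real.sqrt ((G.degree u : ℝ) ^ 2 + (G.degree v : ℝ) ^ 2),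
      fun u v => by dsimp only; rw [add_comm]⟩ with hf
  have hsplit : somborIndex G = ∑ e ∈ (G0 (p * q)).edgeFinset, f e
      + ∑ e ∈ (G1 (p * q)).edgeFinset, f e + ∑ e ∈ (G2 (p * q)).edgeFinset, f e := by
    rw [somborIndex, ← hf, edge_partition (p * q), Finset.sum_union hd012,
      Finset.sum_union hd01]
  have hφ0 : (0 : ℝ) ≤ φ := Nat.cast_nonneg _
  have hφ1 : (1 : ℝ) ≤ φ := by
    simp only [φ, ← ht]; exact_mod_cast ht1
  have hs0 : ∑ e ∈ (G0 (p * q)).edgeFinset, f e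
      = ((G0 (p * q)).edgeFinset.card : ℝ) * (Real.sqrt 2 * φ) := by
    rw [Finset.sum_congr rfl ?_, Finset.sum_const, nsmul_eq_mul]
    intro e he
    induction e with
    | _ x y =>
      rw [SimpleGraph.mem_edgeFinset, SimpleGraph.mem_edgeSet] at he
      obtain ⟨_, _, hx, hy⟩ := he
      show Real.sqrt _ = _
      rw [hdn x hx, hdn y hy, sqrt_two_sq φ hφ0]
  have hs1 : ∑ e ∈ (G1 (p * q)).edgeFinset, f e
      = ((G1 (p * q)).edgeFinset.card : ℝ) * Real.sqrt (φ ^ 2 + (φ - 1) ^ 2) := by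
    rw [Finset.sum_congr rfl ?_, Finset.sum_const, nsmul_eq_mul]
    intro e he
    induction e with
    | _ x y =>
      rw [SimpleGraph.mem_edgeFinset, SimpleGraph.mem_edgeSet] at he
      obtain ⟨_, _, hxy⟩ := he
      show Real.sqrt _ = _
      by_cases hx : IsUnit x
      · have hy : ¬IsUnit y := fun hy => hxy ⟨fun _ => hy, fun _ => hx⟩
        rw [hdu x hx, hdn y hy, add_comm]
      · have hy : IsUnit y := by
          by_contra hy
          exact hxy ⟨fun h => absurd h hx, fun h => absurd h hy⟩
        rw [hdn x hx, hdu y hy]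
  have hs2 : ∑ e ∈ (G2 (p * q)).edgeFinset, f e
      = ((G2 (p * q)).edgeFinset.card : ℝ) * (Real.sqrt 2 * (φ - 1)) := by
    rw [Finset.sum_congr rfl ?_, Finset.sum_const, nsmul_eq_mul]
    intro e he
    induction e with
    | _ x y =>
      rw [SimpleGraph.mem_edgeFinset, SimpleGraph.mem_edgeSet] at he
      obtain ⟨_, _, hx, hy⟩ := he
      show Real.sqrt _ = _
      rw [hdu x hx, hdu y hy, sqrt_two_sq (φ - 1) (by linarith)]
  -- total count
  have htot : G.edgeFinset.card = (G0 (p * q)).edgeFinset.card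
      + (G1 (p * q)).edgeFinset.card + (G2 (p * q)).edgeFinset.card := by
    rw [show G.edgeFinset = _ from edge_partition (p * q),
      Finset.card_union_of_disjoint hd012, Finset.card_union_of_disjoint hd01]
  -- cast the counts
  have hA : ((G0 (p * q)).edgeFinset.card : ℝ) = A := by
    rw [hn0]
    simp only [A]
    push_cast [Nat.cast_sub (by omega : 1 ≤ p), Nat.cast_sub (by omega : 1 ≤ q)]
    ring
  have hB : ((G1 (p * q)).edgeFinset.card : ℝ) = B := by
    rw [hn1]
    simp only [B]
    push_cast [Nat.cast_sub (by omega : 1 ≤ p), Nat.cast_sub (by omega : 1 ≤ q),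
      Nat.cast_sub (by omega : 2 ≤ p)]
    ring
  have hC : ((G2 (p * q)).edgeFinset.card : ℝ) = E - A - B := by
    have := congrArg (fun k : ℕ => (k : ℝ)) htot
    push_cast at this
    rw [hA, hB] at this
    simp only [E, ← hG]
    linarith
  rw [hsplit, hs0, hs1, hs2, hA, hB, hC]
  ring
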